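/- arXiv:math/0603039 — 8 statements merged into one kernel-verified Lean document; each statement's English description precedes it below -/
import Mathlib

section
/- Let u be a profile of n voters' strict preference orders on a set A of p candidates (p ≥ 2). For a candidate a ∈ A, there exists a strict scoring s (i.e. s_0 < s_1 < … < s_{p-1}) such that a belongs to the de Borda winner set β_s(u) if and only if the score vector r(a) belongs to the Pareto boundary of the convex hull of the set R = {r(x) : x ∈ A} ⊆ ℝ^{p-1}. -/
/-- The de Borda estimate of candidate `a` under scores `s` for profile `u`,
where `u i a : Fin p` is the 0-indexed rank of candidate `a` in the preference
of voter `i` (`0` = top place).  A candidate with 0-indexed rank `r` obtains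
`s (p-1-r)` points, i.e. `B_s(a) = ∑_i s_{p - rank_i(a)}` with 1-indexed ranks. -/
def bordaEstimate {n p : ℕ} (u : Fin n → Equiv.Perm (Fin p)) (s : Fin p → ℝ)
    (a : Fin p) : ℝ :=
  ∑ i : Fin n, s (Fin.rev (u i a))

/-- The score vector of candidate `a` : its `k`-th component (`k : Fin (p-1)`,
0-indexed) is the number of voters who place `a` within the top `k+1` places. -/
def scoreVec {n p : ℕ} (u : Fin n → Equiv.Perm (Fin p)) (a : Fin p) :
    Fin (p - 1) → ℝ :=
  fun k => ((Finset.univ : Finset (Fin n)).filter fun i => ((u i a : Fin p) : ℕ) ≤ (k : ℕ)).card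

/-- `f'` belongs to the Pareto boundary of `F`. -/
def ParetoOpt {m : ℕ} (F : Set (Fin m → ℝ)) (f' : Fin m → ℝ) : Prop :=
  f' ∈ F ∧ ¬ ∃ f ∈ F, (∀ j, f' j ≤ f j) ∧ ∃ j0, f' j0 < f j0

/-- `f''` belongs to the weak Pareto boundary of `F`. -/
def WeakParetoOpt {m : ℕ} (F : Set (Fin m → ℝ)) (f'' : Fin m → ℝ) : Prop :=
  f'' ∈ F ∧ ¬ ∃ f ∈ F, ∀ j, f'' j < f j

/-!
Writing `r_k` for the number of voters placing a candidate in the top `k` places, the Borda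
estimate is `n s_0 + ∑_k (s_{p-k} - s_{p-k-1}) r_k`, so through their increments strict scorings
correspond to strictly positive weight vectors, and the claim is that `r(a)` is Pareto optimal
in `conv R` iff some strictly positive linear functional is maximised over `R` at `r(a)`.
Sufficiency is immediate. Conversely, Pareto optimality makes the cone generated by `R - r(a)`
miss the standard simplex; being finitely generated, this cone is closed (conic Carathéodory), so
Farkas' lemma yields a functional nonnegative on the cone and negative on the simplex, whose
negative has strictly positive coefficients.
-/

open Finset
open scoped Pointwise

namespace PointedCone

lemma mem_hull_finset {𝕜 E : Type*} [Semiring 𝕜] [PartialOrder 𝕜] [IsOrderedRing 𝕜]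
    [AddCommMonoid E] [Module 𝕜 E] {s : Finset E} {x : E} :
    x ∈ hull 𝕜 (s : Set E) ↔ ∃ f : E → 𝕜, (∀ y ∈ s, 0 ≤ f y) ∧ ∑ y ∈ s, f y • y = x := by
  classical
  rw [Submodule.mem_span_finset]
  constructor
  · rintro ⟨f, -, rfl⟩
    exact ⟨fun y => f y, fun y _ => (f y).2, rfl⟩
  · rintro ⟨f, hf, rfl⟩
    refine ⟨fun y => if hy : y ∈ s then ⟨f y, hf y hy⟩ else 0, fun y hy => ?_, ?_⟩
    · by_contra h
      simp [Function.mem_support, show y ∉ s from h] at hy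
    · exact sum_congr rfl fun y hy => by simp [hy, Nonneg.mk_smul]

variable {𝕜 E : Type*} [Field 𝕜] [LinearOrder 𝕜] [IsStrictOrderedRing 𝕜]
  [AddCommGroup E] [Module 𝕜 E]

lemma mem_hull_erase [DecidableEq E] {s : Finset E} (hs : ¬ LinearIndepOn 𝕜 id (s : Set E))
    {x : E} (hx : x ∈ hull 𝕜 (s : Set E)) : ∃ y ∈ s, x ∈ hull 𝕜 (↑(s.erase y) : Set E) := by
  obtain ⟨g, hg, i₀, hi₀, hgi₀⟩ : ∃ g : E → 𝕜, ∑ i ∈ s, g i • i = 0 ∧ ∃ i ∈ s, 0 < g i := by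
    obtain ⟨g, hg, i, hi, hgi⟩ := not_linearIndepOn_finset_iff.1 hs
    rcases hgi.lt_or_gt with hneg | hpos
    · exact ⟨-g, by simpa [neg_smul] using hg, i, hi, by simpa using hneg⟩
    · exact ⟨g, by simpa using hg, i, hi, hpos⟩
  obtain ⟨f, hf, rfl⟩ := mem_hull_finset.1 hx
  -- subtract the multiple of the relation `g` that first makes a coefficient vanish
  obtain ⟨y, hy, hmin⟩ := exists_min_image (s.filter (0 < g ·)) (fun i => f i / g i)
    ⟨i₀, mem_filter.2 ⟨hi₀, hgi₀⟩⟩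
  obtain ⟨hys, hgy⟩ := mem_filter.1 hy
  set t := f y / g y
  refine ⟨y, hys, mem_hull_finset.2 ⟨fun i => f i - t * g i, fun i hi => ?_, ?_⟩⟩
  · have his := mem_of_mem_erase hi
    rcases le_or_gt (g i) 0 with hgi | hgi
    · linarith [hf i his, mul_nonpos_of_nonneg_of_nonpos (div_nonneg (hf y hys) hgy.le) hgi]
    · simpa using (le_div_iff₀ hgi).1 (hmin i (mem_filter.2 ⟨his, hgi⟩))
  · rw [sum_erase s (by simp [t, div_mul_cancel₀ _ hgy.ne'])]
    simp only [sub_smul, sum_sub_distrib, mul_smul, ← smul_sum, hg, smul_zero, sub_zero]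

lemma exists_linearIndepOn_of_mem_hull {s : Finset E} {x : E} (hx : x ∈ hull 𝕜 (s : Set E)) :
    ∃ t ⊆ s, LinearIndepOn 𝕜 id (t : Set E) ∧ x ∈ hull 𝕜 (t : Set E) := by
  classical
  induction s using Finset.strongInduction with
  | H s ih =>
    by_cases hs : LinearIndepOn 𝕜 id (s : Set E)
    · exact ⟨s, subset_rfl, hs, hx⟩
    · obtain ⟨y, hy, hxy⟩ := mem_hull_erase hs hx
      obtain ⟨t, hts, ht, hxt⟩ := ih _ (erase_ssubset hy) hxy
      exact ⟨t, hts.trans (erase_subset y s), ht, hxt⟩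

lemma mem_hull_of_convex_of_zero_mem {s : Set E} (hs : Convex 𝕜 s) (h₀ : (0 : E) ∈ s) {x : E} :
    x ∈ hull 𝕜 s ↔ ∃ t : 𝕜, 0 < t ∧ x ∈ t • s := by
  constructor
  · intro hx
    have hpointed : (ConvexCone.hull 𝕜 s).Pointed := ConvexCone.subset_hull h₀
    have : hull 𝕜 s ≤ (ConvexCone.hull 𝕜 s).toPointedCone hpointed :=
      Submodule.span_le.2 ConvexCone.subset_hull
    exact (ConvexCone.mem_hull_of_convex hs).1 (this hx)
  · rintro ⟨t, ht, y, hy, rfl⟩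
    exact (hull 𝕜 s).smul_mem ht.le (subset_hull hy)

section Topology

variable {E : Type*} [AddCommGroup E] [TopologicalSpace E] [IsTopologicalAddGroup E]
  [Module ℝ E] [ContinuousSMul ℝ E] [T2Space E]

lemma isClosed_hull_of_linearIndepOn {t : Finset E} (ht : LinearIndepOn ℝ id (t : Set E)) :
    IsClosed (hull ℝ (t : Set E) : Set E) := by
  set L := Fintype.linearCombination ℝ ((↑) : t → E)
  have hL : Topology.IsClosedEmbedding L := LinearMap.isClosedEmbedding_of_injective
    (LinearMap.ker_eq_bot.2 (linearIndependent_iff_injective_fintypeLinearCombination.1 ht))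
  have himage : (hull ℝ (t : Set E) : Set E) = L '' {c | 0 ≤ c} := by
    ext x
    simp only [SetLike.mem_coe, mem_hull_finset, Set.mem_image, Set.mem_ofPred_eq, L,
      Fintype.linearCombination_apply]
    constructor
    · rintro ⟨f, hf, rfl⟩
      exact ⟨fun y => f y, fun y => hf y y.2, sum_coe_sort t (fun y => f y • y)⟩
    · rintro ⟨c, hc, rfl⟩
      classical
      refine ⟨fun y => if hy : y ∈ t then c ⟨y, hy⟩ else 0,
        fun y hy => by simpa [hy] using hc ⟨y, hy⟩, ?_⟩
      rw [← sum_coe_sort t]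
      exact sum_congr rfl fun y _ => by simp
  rw [himage]
  exact hL.isClosedMap _ (isClosed_le continuous_const continuous_id)

lemma isClosed_hull_of_finite {s : Set E} (hs : s.Finite) : IsClosed (hull ℝ s : Set E) := by
  classical
  obtain ⟨s, rfl⟩ := hs.exists_finset_coe
  have hunion : (hull ℝ (s : Set E) : Set E) =
      ⋃ t ∈ s.powerset.filter (fun t : Finset E => LinearIndepOn ℝ id (t : Set E)),
        (hull ℝ (t : Set E) : Set E) := by
    ext x
    simp only [SetLike.mem_coe, Set.mem_iUnion, mem_filter, mem_powerset, exists_prop]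
    constructor
    · intro hx
      obtain ⟨t, hts, ht, hxt⟩ := exists_linearIndepOn_of_mem_hull hx
      exact ⟨t, ⟨hts, ht⟩, hxt⟩
    · rintro ⟨t, ⟨hts, -⟩, hxt⟩
      exact Submodule.span_mono (by exact_mod_cast hts) hxt
  rw [hunion]
  exact (finite_toSet _).isClosed_biUnion fun t ht =>
    isClosed_hull_of_linearIndepOn (mem_filter.1 ht).2

end Topology

end PointedCone

lemma StrongDual.apply_eq_dotProduct {ι : Type*} [Fintype ι] [DecidableEq ι]
    (f : StrongDual ℝ (ι → ℝ)) (w : ι → ℝ) : f w = (fun j => f (Pi.single j 1)) ⬝ᵥ w := by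
  conv_lhs => rw [← univ_sum_single w]
  simp only [map_sum, dotProduct, mul_comm]
  exact sum_congr rfl fun j _ => by
    rw [← smul_eq_mul, ← map_smul, ← Pi.single_smul', smul_eq_mul, mul_one]

section Pareto

variable {m : ℕ} {R : Set (Fin m → ℝ)} {r : Fin m → ℝ}

lemma paretoOpt_convexHull_of_pos_weights (hr : r ∈ R) {c : Fin m → ℝ} (hc : ∀ j, 0 < c j)
    (hmax : ∀ x ∈ R, c ⬝ᵥ x ≤ c ⬝ᵥ r) : ParetoOpt (convexHull ℝ R) r := by
  refine ⟨subset_convexHull ℝ R hr, ?_⟩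
  rintro ⟨f, hf, hle, j, hlt⟩
  have hf_le : c ⬝ᵥ f ≤ c ⬝ᵥ r :=
    convexHull_min hmax
      (convex_halfSpace_le ⟨dotProduct_add c, fun t w => dotProduct_smul t c w⟩ _) hf
  have hf_gt : c ⬝ᵥ r < c ⬝ᵥ f :=
    sum_lt_sum (fun i _ => mul_le_mul_of_nonneg_left (hle i) (hc i).le)
      ⟨j, mem_univ j, mul_lt_mul_of_pos_left hlt (hc j)⟩
  exact hf_le.not_gt hf_gt

lemma exists_pos_weights_of_paretoOpt_convexHull (hR : R.Finite)
    (hpar : ParetoOpt (convexHull ℝ R) r) :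
    ∃ c : Fin m → ℝ, (∀ j, 0 < c j) ∧ ∀ x ∈ R, c ⬝ᵥ x ≤ c ⬝ᵥ r := by
  let K : ProperCone ℝ (Fin m → ℝ) :=
    ⟨PointedCone.hull ℝ ((· - r) '' R), PointedCone.isClosed_hull_of_finite (hR.image _)⟩
  -- a point `t • d` of the simplex in `K` would make `r + d` a point of the hull dominating `r`
  have hdisj : Disjoint (stdSimplex ℝ (Fin m)) K := by
    rw [Set.disjoint_left]
    intro y hy hyK
    have hD : Convex ℝ ((r + ·) ⁻¹' convexHull ℝ R) :=
      (convex_convexHull ℝ R).translate_preimage_right r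
    have hyD : y ∈ PointedCone.hull ℝ ((r + ·) ⁻¹' convexHull ℝ R) := by
      refine Submodule.span_mono ?_ hyK
      rintro _ ⟨x, hx, rfl⟩
      simpa using subset_convexHull ℝ R hx
    obtain ⟨t, ht, d, hd, rfl⟩ :=
      (PointedCone.mem_hull_of_convex_of_zero_mem hD (by simpa using hpar.1)).1 hyD
    obtain ⟨j, -, hj⟩ : ∃ j ∈ univ, (0 : Fin m → ℝ) j < (t • d) j :=
      exists_lt_of_sum_lt (by simp only [Pi.zero_apply, sum_const_zero, hy.2, zero_lt_one])
    refine hpar.2 ⟨r + d, hd, fun i => ?_, j, ?_⟩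
    · simpa using (mul_nonneg_iff_of_pos_left ht).1 (hy.1 i)
    · simpa using (mul_pos_iff_of_pos_left ht).1 (by simpa using hj)
  obtain ⟨f, hfK, hfΔ⟩ :=
    K.hyperplane_separation (convex_stdSimplex ℝ _) (isCompact_stdSimplex ℝ _) hdisj
  refine ⟨-fun j => f (Pi.single j 1), fun j => neg_pos.2 (hfΔ _ (single_mem_stdSimplex ℝ j)),
    fun x hx => ?_⟩
  have hx' := hfK (x - r) (PointedCone.subset_hull ⟨x, hx, rfl⟩)
  rw [map_sub, f.apply_eq_dotProduct, f.apply_eq_dotProduct] at hx'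
  simp only [neg_dotProduct]
  linarith

lemma paretoOpt_convexHull_iff_exists_pos_weights (hR : R.Finite) (hr : r ∈ R) :
    ParetoOpt (convexHull ℝ R) r ↔ ∃ c : Fin m → ℝ, (∀ j, 0 < c j) ∧ ∀ x ∈ R, c ⬝ᵥ x ≤ c ⬝ᵥ r :=
  ⟨exists_pos_weights_of_paretoOpt_convexHull hR,
    fun ⟨_, hc, hmax⟩ => paretoOpt_convexHull_of_pos_weights hr hc hmax⟩

end Pareto

lemma Fin.apply_eq_apply_last_add_sum {M : Type*} [AddCommGroup M] {q : ℕ}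
    (f : Fin (q + 1) → M) (ρ : Fin (q + 1)) :
    f ρ = f (Fin.last q) + ∑ k : Fin q, if ρ ≤ k.castSucc then f k.castSucc - f k.succ else 0 := by
  induction q with
  | zero => simp [Fin.eq_zero ρ]
  | succ q ih =>
    rw [Fin.sum_univ_castSucc]
    cases ρ using Fin.lastCases with
    | last => simp
    | cast ρ =>
      have h := ih (fun i => f i.castSucc) ρ
      simp only [Fin.succ_castSucc, Fin.castSucc_le_castSucc_iff, Fin.le_last, ↓reduceIte,
        Fin.succ_last] at h ⊢
      rw [h]
      abel

section Borda

variable {n q : ℕ}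

-- the extra points earned by (0-indexed) place `k` over place `k + 1`
def scoringGap (s : Fin (q + 1) → ℝ) (k : Fin q) : ℝ := s k.castSucc.rev - s k.succ.rev

lemma bordaEstimate_eq_add_scoringGap_dotProduct (u : Fin n → Equiv.Perm (Fin (q + 1)))
    (s : Fin (q + 1) → ℝ) (b : Fin (q + 1)) :
    bordaEstimate u s b = n * s 0 + scoringGap s ⬝ᵥ scoreVec u b := by
  have hvoter : ∀ i, s (u i b).rev =
      s 0 + ∑ k : Fin q, if u i b ≤ k.castSucc then scoringGap s k else 0 := fun i => by
    simpa [scoringGap] using Fin.apply_eq_apply_last_add_sum (s ∘ Fin.rev) (u i b)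
  simp only [bordaEstimate, hvoter, sum_add_distrib, sum_const, card_univ, Fintype.card_fin,
    nsmul_eq_mul]
  rw [sum_comm]
  simp [dotProduct, scoreVec, ← sum_filter, Fin.le_def, mul_comm]

lemma strictMono_iff_scoringGap_pos {s : Fin (q + 1) → ℝ} :
    StrictMono s ↔ ∀ k, 0 < scoringGap s k := by
  have hgap : ∀ k, scoringGap s k = s k.rev.succ - s k.rev.castSucc := fun k => by
    simp [scoringGap, Fin.rev_castSucc, Fin.rev_succ]
  rw [Fin.strictMono_iff_lt_succ]
  constructor
  · intro h k
    rw [hgap]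
    exact sub_pos.2 (h k.rev)
  · intro h i
    simpa [hgap] using h i.rev

lemma exists_scoringGap_eq (c : Fin q → ℝ) : ∃ s : Fin (q + 1) → ℝ, scoringGap s = c := by
  refine ⟨fun j => ∑ k' : Fin q, if j.rev ≤ k'.castSucc then c k' else 0, funext fun k => ?_⟩
  simp only [scoringGap, Fin.rev_rev, ← sum_sub_distrib]
  rw [Fintype.sum_eq_single k fun k' hk' => ?_]
  · simp [Fin.le_def]
  · have : (k' : ℕ) ≠ k := Fin.val_ne_of_ne hk'
    simp only [Fin.le_def, Fin.val_castSucc, Fin.val_succ]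
    split_ifs <;> first | (exfalso; omega) | simp

lemma exists_strictMono_bordaWinner_iff_exists_pos_weights
    (u : Fin n → Equiv.Perm (Fin (q + 1))) (a : Fin (q + 1)) :
    (∃ s : Fin (q + 1) → ℝ, StrictMono s ∧ ∀ b, bordaEstimate u s b ≤ bordaEstimate u s a) ↔
      ∃ c : Fin q → ℝ, (∀ k, 0 < c k) ∧ ∀ b, c ⬝ᵥ scoreVec u b ≤ c ⬝ᵥ scoreVec u a := by
  have hwin : ∀ s b, bordaEstimate u s b ≤ bordaEstimate u s a ↔
      scoringGap s ⬝ᵥ scoreVec u b ≤ scoringGap s ⬝ᵥ scoreVec u a := fun s b => by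
    simp only [bordaEstimate_eq_add_scoringGap_dotProduct, add_le_add_iff_left]
  constructor
  · rintro ⟨s, hs, hmax⟩
    exact ⟨scoringGap s, strictMono_iff_scoringGap_pos.1 hs, fun b => (hwin s b).1 (hmax b)⟩
  · rintro ⟨c, hc, hmax⟩
    obtain ⟨s, rfl⟩ := exists_scoringGap_eq c
    exact ⟨s, strictMono_iff_scoringGap_pos.2 hc, fun b => (hwin s b).2 (hmax b)⟩

end Borda

theorem eligibility_strict_iff_general {n p : ℕ}
    (u : Fin n → Equiv.Perm (Fin p)) (a : Fin p) :
    (∃ s : Fin p → ℝ, StrictMono s ∧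
        ∀ b : Fin p, bordaEstimate u s b ≤ bordaEstimate u s a) ↔
      ParetoOpt (convexHull ℝ (Set.range (scoreVec u))) (scoreVec u a) := by
  obtain ⟨q, rfl⟩ := Nat.exists_eq_add_one_of_ne_zero a.pos.ne'
  rw [exists_strictMono_bordaWinner_iff_exists_pos_weights,
    paretoOpt_convexHull_iff_exists_pos_weights (Set.finite_range _) (Set.mem_range_self a)]
  simp only [Set.forall_mem_range]
  -- `Fin (q + 1 - 1)` is definitionally `Fin q`
  exact Iff.rfl

/-- There exists a strict scoring `s` (i.e. `s_0 < s_1 < ... < s_{p-1}`) making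
candidate `a` a de Borda winner if and only if the score vector `r(a)` belongs
to the Pareto boundary of the convex hull of the set `R` of all score vectors. -/
theorem eligibility_strict_iff {n p : ℕ} (hn : 1 ≤ n) (hp : 2 ≤ p)
    (u : Fin n → Equiv.Perm (Fin p)) (a : Fin p) :
    (∃ s : Fin p → ℝ, StrictMono s ∧
        ∀ b : Fin p, bordaEstimate u s b ≤ bordaEstimate u s a) ↔
      ParetoOpt (convexHull ℝ (Set.range (scoreVec u))) (scoreVec u a) :=
  eligibility_strict_iff_general u a
end

section
/- Let u be a profile of n voters' strict preference orders on a set A of p candidates (p ≥ 2), let s be a strict scoring (s_0 < s_1 < … < s_{p-1}), and suppose a candidate a ∈ A belongs to the de Borda winner set β_s(u). Then the score vector r(a) belongs to the Pareto boundary of the convex hull of R = {r(x) : x ∈ A} ⊆ ℝ^{p-1}. -/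
def wfun (m : ℕ) (s : Fin (m + 2) → ℝ) (j : Fin (m + 1)) : ℝ :=
  s ⟨m + 1 - (j : ℕ), by omega⟩ - s ⟨m - (j : ℕ), by omega⟩

lemma wfun_pos {m : ℕ} {s : Fin (m + 2) → ℝ} (hs : StrictMono s) (j : Fin (m + 1)) :
    0 < wfun m s j := by
  have h : (⟨m - (j : ℕ), by omega⟩ : Fin (m + 2)) < ⟨m + 1 - (j : ℕ), by omega⟩ := by
    simp only [Fin.mk_lt_mk]; omega
  simpa [wfun, sub_pos] using hs h

lemma rev_expand {m : ℕ} (s : Fin (m + 2) → ℝ) (r : Fin (m + 2)) :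
    s (Fin.rev r) = s ⟨0, by omega⟩ +
      ∑ j : Fin (m + 1), (if (r : ℕ) ≤ (j : ℕ) then wfun m s j else 0) := by
  set f : ℕ → ℝ := fun t => s ⟨m + 1 - t, by omega⟩ with hf
  have hfw : ∀ j : Fin (m + 1), wfun m s j = f (j : ℕ) - f ((j : ℕ) + 1) := by
    intro j
    have he : (⟨m - (j : ℕ), by omega⟩ : Fin (m + 2)) = ⟨m + 1 - ((j : ℕ) + 1), by omega⟩ := by
      simp only [Fin.mk.injEq]; omega
    simp only [wfun, hf, he]
  have h0 : s (Fin.rev r) = f (r : ℕ) := by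
    simp only [hf]
    congr 1
    ext
    simp only [Fin.val_rev]
    omega
  have hlast : s ⟨0, by omega⟩ = f (m + 1) := by
    simp only [hf]
    congr 1
    ext
    simp
  have h1 : ∑ j : Fin (m + 1), (if (r : ℕ) ≤ (j : ℕ) then wfun m s j else 0)
      = ∑ t ∈ Finset.range (m + 1), (if (r : ℕ) ≤ t then f t - f (t + 1) else 0) := by
    simp only [hfw]
    exact Fin.sum_univ_eq_sum_range (fun t => if (r : ℕ) ≤ t then f t - f (t + 1) else 0)
      (m + 1)
  have hfil : Finset.filter (fun t => (r : ℕ) ≤ t) (Finset.range (m + 1))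
      = Finset.Ico (r : ℕ) (m + 1) := by
    ext t
    simp only [Finset.mem_filter, Finset.mem_range, Finset.mem_Ico]
    omega
  have h2 : ∑ t ∈ Finset.range (m + 1), (if (r : ℕ) ≤ t then f t - f (t + 1) else 0)
      = ∑ t ∈ Finset.Ico (r : ℕ) (m + 1), (f t - f (t + 1)) := by
    rw [← hfil, Finset.sum_filter]
  have tele : ∑ t ∈ Finset.Ico (r : ℕ) (m + 1), (f t - f (t + 1)) = f (r : ℕ) - f (m + 1) := by
    have hr : (r : ℕ) ≤ m + 1 := by omega
    rw [Finset.sum_Ico_eq_sum_range]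
    have h := Finset.sum_range_sub' (fun i => f ((r : ℕ) + i)) (m + 1 - (r : ℕ))
    have h2' : (r : ℕ) + (m + 1 - (r : ℕ)) = m + 1 := by omega
    rw [h2'] at h
    simpa [add_assoc] using h
  rw [h0, hlast, h1, h2, tele]
  ring

lemma borda_eq {n m : ℕ} (u : Fin n → Equiv.Perm (Fin (m + 2))) (s : Fin (m + 2) → ℝ)
    (b : Fin (m + 2)) :
    bordaEstimate u s b = (n : ℝ) * s ⟨0, by omega⟩ +
      ∑ j : Fin (m + 1), wfun m s j * scoreVec u b j := by
  unfold bordaEstimate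
  calc ∑ i : Fin n, s (Fin.rev (u i b))
      = ∑ i : Fin n, (s ⟨0, by omega⟩ +
          ∑ j : Fin (m + 1), (if ((u i b : Fin (m + 2)) : ℕ) ≤ (j : ℕ) then wfun m s j else 0)) :=
        Finset.sum_congr rfl fun i _ => rev_expand s (u i b)
    _ = (n : ℝ) * s ⟨0, by omega⟩ +
          ∑ i : Fin n, ∑ j : Fin (m + 1),
            (if ((u i b : Fin (m + 2)) : ℕ) ≤ (j : ℕ) then wfun m s j else 0) := by
        rw [Finset.sum_add_distrib, Finset.sum_const, nsmul_eq_mul, Finset.card_univ,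
          Fintype.card_fin]
    _ = (n : ℝ) * s ⟨0, by omega⟩ + ∑ j : Fin (m + 1), wfun m s j * scoreVec u b j := by
        rw [Finset.sum_comm]
        congr 1
        refine Finset.sum_congr rfl fun j _ => ?_
        rw [← Finset.sum_filter, Finset.sum_const, nsmul_eq_mul]
        unfold scoreVec
        rw [mul_comm]

/-- If `a` is a de Borda winner for a strict scoring `s`, then its score vector
lies on the Pareto boundary of the convex hull of the set of all score vectors. -/
theorem winner_strict_mem_paretoBoundary_convexHull {n p : ℕ} (hn : 1 ≤ n) (hp : 2 ≤ p)
    (u : Fin n → Equiv.Perm (Fin p)) (s : Fin p → ℝ) (hs : StrictMono s)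
    (a : Fin p) (ha : ∀ b : Fin p, bordaEstimate u s b ≤ bordaEstimate u s a) :
    ParetoOpt (convexHull ℝ (Set.range (scoreVec u))) (scoreVec u a) := by
  obtain ⟨m, rfl⟩ : ∃ m, p = m + 2 := ⟨p - 2, by omega⟩
  refine ⟨subset_convexHull ℝ _ ⟨a, rfl⟩, ?_⟩
  rintro ⟨g, hg, hge, j0, hj0⟩
  have hLlin : IsLinearMap ℝ (fun x : Fin (m + 1) → ℝ => ∑ j, wfun m s j * x j) := by
    constructor
    · intro x y
      simp [mul_add, Finset.sum_add_distrib]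
    · intro c x
      simp [Finset.mul_sum, mul_left_comm]
  have h1 : ∑ j : Fin (m + 1), wfun m s j * g j
      ≤ ∑ j : Fin (m + 1), wfun m s j * scoreVec u a j := by
    have hconv : convexHull ℝ (Set.range (scoreVec u)) ⊆
        {x : Fin (m + 1) → ℝ | ∑ j : Fin (m + 1), wfun m s j * x j
          ≤ ∑ j : Fin (m + 1), wfun m s j * scoreVec u a j} := by
      apply convexHull_min
      · rintro _ ⟨b, rfl⟩
        have hb := ha b
        rw [borda_eq u s b, borda_eq u s a] at hb
        show ∑ j : Fin (m + 1), wfun m s j * scoreVec u b j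
          ≤ ∑ j : Fin (m + 1), wfun m s j * scoreVec u a j
        linarith
      · exact convex_halfSpace_le hLlin _
    exact hconv hg
  have h2 : ∑ j : Fin (m + 1), wfun m s j * scoreVec u a j
      < ∑ j : Fin (m + 1), wfun m s j * g j := by
    apply Finset.sum_lt_sum
    · intro j _
      exact mul_le_mul_of_nonneg_left (hge j) (wfun_pos hs j).le
    · exact ⟨j0, Finset.mem_univ _, mul_lt_mul_of_pos_left (hj0) (wfun_pos hs j0)⟩
  linarith
end

section
/- Let u be a profile of n voters' strict preference orders on a set A of p candidates (p ≥ 2), and let a ∈ A be a candidate whose score vector r(a) belongs to the Pareto boundary of the convex hull of R = {r(x) : x ∈ A} ⊆ ℝ^{p-1}. Then there exists a strict scoring s (s_0 < s_1 < … < s_{p-1}) such that a belongs to the de Borda winner set β_s(u). -/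
open Matrix Finset

section Farkas

variable {ι κ : Type*} [Fintype κ]

theorem farkas_finset (s : Finset ι) (d : ι → κ → ℝ) (b : κ → ℝ) :
    (∃ μ : ι → ℝ, 0 ≤ μ ∧ ∑ i ∈ s, μ i • d i = b) ∨
      ∃ l : κ → ℝ, (∀ i ∈ s, l ⬝ᵥ d i ≤ 0) ∧ 0 < l ⬝ᵥ b := by
  classical
  induction s using Finset.induction_on generalizing d b with
  | empty =>
    by_cases hb : b = 0
    · exact .inl ⟨0, le_rfl, by simp [hb]⟩
    · exact .inr ⟨b, by simp, by simpa using dotProduct_self_star_pos_iff.2 hb⟩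
  | insert j s hj ih =>
    have update_nonneg {μ : ι → ℝ} (hμ : 0 ≤ μ) {γ : ℝ} (hγ : 0 ≤ γ) :
        0 ≤ Function.update μ j γ := fun i => by
      rcases eq_or_ne i j with rfl | h
      · simpa using hγ
      · simpa [h] using hμ i
    have sum_update (μ : ι → ℝ) (γ : ℝ) :
        ∑ i ∈ insert j s, Function.update μ j γ i • d i = γ • d j + ∑ i ∈ s, μ i • d i := by
      rw [sum_insert hj, Function.update_self]
      congr 1
      exact sum_congr rfl fun i hi => by rw [Function.update_of_ne (ne_of_mem_of_not_mem hi hj)]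
    rcases ih d b with ⟨μ, hμ, hb⟩ | ⟨l, hl, hlb⟩
    · refine .inl ⟨Function.update μ j 0, update_nonneg hμ le_rfl, ?_⟩
      rw [sum_update, zero_smul, zero_add, hb]
    by_cases hlj : l ⬝ᵥ d j ≤ 0
    · exact .inr ⟨l, (forall_mem_insert _ _ _).2 ⟨hlj, hl⟩, hlb⟩
    push Not at hlj
    -- Project along `d j` onto the hyperplane `l = 0` and apply the induction hypothesis there.
    set c : (κ → ℝ) → ℝ := fun v => l ⬝ᵥ v / l ⬝ᵥ d j with hc
    rcases ih (fun i => d i - c (d i) • d j) (b - c b • d j) with ⟨μ, hμ, hb⟩ | ⟨l', hl', hlb'⟩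
    · have hsum : ∑ i ∈ s, μ i * c (d i) ≤ 0 := sum_nonpos fun i hi =>
        mul_nonpos_of_nonneg_of_nonpos (hμ i) (div_nonpos_of_nonpos_of_nonneg (hl i hi) hlj.le)
      have hcb : 0 < c b := div_pos hlb hlj
      refine .inl ⟨Function.update μ j (c b - ∑ i ∈ s, μ i * c (d i)),
        update_nonneg hμ (by linarith), ?_⟩
      rw [sum_update]
      simp only [smul_sub, sum_sub_distrib, smul_smul, ← sum_smul] at hb
      linear_combination (norm := module) hb
    · set l'' := l' - (l' ⬝ᵥ d j / l ⬝ᵥ d j) • l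
      have key : ∀ v, l'' ⬝ᵥ v = l' ⬝ᵥ (v - c v • d j) := fun v => by
        simp only [l'', hc, sub_dotProduct, dotProduct_sub, smul_dotProduct, dotProduct_smul,
          smul_eq_mul]
        ring
      have hcj : c (d j) = 1 := div_self hlj.ne'
      refine .inr ⟨l'', (forall_mem_insert _ _ _).2 ⟨?_, fun i hi => (key _).trans_le (hl' i hi)⟩,
        (key b).symm ▸ hlb'⟩
      simp [key, hcj]

theorem farkas_le [Fintype ι] (d : ι → κ → ℝ) (b : κ → ℝ) :
    (∃ μ : ι → ℝ, 0 ≤ μ ∧ b ≤ ∑ i, μ i • d i) ∨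
      ∃ l : κ → ℝ, 0 ≤ l ∧ (∀ i, l ⬝ᵥ d i ≤ 0) ∧ 0 < l ⬝ᵥ b := by
  classical
  -- The slack generators `-Pi.single k 1` turn the inequality into an equation.
  rcases farkas_finset univ (Sum.elim d fun k => -Pi.single k 1) b with ⟨μ, hμ, hb⟩ | ⟨l, hl, hlb⟩
  · refine .inl ⟨μ ∘ Sum.inl, fun i => hμ _, ?_⟩
    have hslack : ∑ k, μ (Sum.inr k) • -Pi.single k (1 : ℝ) = -fun k => μ (Sum.inr k) := by
      simp only [smul_neg, ← Pi.single_smul, smul_eq_mul, mul_one, sum_neg_distrib,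
        univ_sum_single]
    rw [Fintype.sum_sum_type] at hb
    simp only [Sum.elim_inl, Sum.elim_inr, hslack] at hb
    rw [← hb]
    exact sub_le_self _ fun k => hμ _
  · refine .inr ⟨l, fun k => ?_, fun i => hl (.inl i) (mem_univ _), hlb⟩
    simpa [dotProduct_single] using hl (.inr k) (mem_univ _)

end Farkas

theorem ParetoOpt.sum_smul_sub_eq_zero {ι : Type*} [Fintype ι] {m : ℕ} {r : ι → Fin m → ℝ}
    {y : Fin m → ℝ} (hy : ParetoOpt (convexHull ℝ (Set.range r)) y) {μ : ι → ℝ} (hμ : 0 ≤ μ)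
    (hv : 0 ≤ ∑ i, μ i • (r i - y)) : ∑ i, μ i • (r i - y) = 0 := by
  set v := ∑ i, μ i • (r i - y) with hv_def
  by_contra hne
  have hσ : 0 < ∑ i, μ i := by
    refine (sum_nonneg fun i _ => hμ i).lt_of_ne' fun h0 => hne ?_
    have hμ0 := (sum_eq_zero_iff_of_nonneg fun i _ => hμ i).1 h0
    simp [hv_def, hμ0]
  have hcenter : univ.centerMass μ r = y + (∑ i, μ i)⁻¹ • v := by
    simp only [centerMass, hv_def, smul_sub, sum_sub_distrib, ← sum_smul, smul_smul,
      inv_mul_cancel₀ hσ.ne', one_smul, add_sub_cancel]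
  obtain ⟨j0, hj0⟩ := (Pi.lt_def.1 (lt_of_le_of_ne hv (Ne.symm hne))).2
  refine hy.2 ⟨_, centerMass_mem_convexHull _ (fun i _ => hμ i) hσ fun i _ => ⟨i, rfl⟩,
    fun j => ?_, j0, ?_⟩ <;> rw [hcenter]
  · simpa using mul_nonneg (inv_nonneg.2 hσ.le) (hv j)
  · simpa using mul_pos (inv_pos.2 hσ) hj0

theorem ParetoOpt.exists_pos_dotProduct_le {ι : Type*} [Fintype ι] {m : ℕ} {r : ι → Fin m → ℝ}
    {y : Fin m → ℝ} (hy : ParetoOpt (convexHull ℝ (Set.range r)) y) :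
    ∃ w : Fin m → ℝ, (∀ j, 0 < w j) ∧ ∀ i, w ⬝ᵥ r i ≤ w ⬝ᵥ y := by
  classical
  have hsupport (j : Fin m) : ∃ l : Fin m → ℝ, 0 ≤ l ∧ 0 < l j ∧ ∀ i, l ⬝ᵥ (r i - y) ≤ 0 := by
    rcases farkas_le (fun i => r i - y) (Pi.single j 1) with ⟨μ, hμ, hle⟩ | ⟨l, hl0, hl, hlj⟩
    · have h0 := hy.sum_smul_sub_eq_zero hμ ((Pi.single_nonneg.2 zero_le_one).trans hle)
      rw [h0] at hle
      exact absurd (hle j) (by simp)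
    · exact ⟨l, hl0, by simpa using hlj, hl⟩
  choose l hl0 hlpos hl using hsupport
  refine ⟨∑ j, l j, fun k => ?_, fun i => ?_⟩
  · rw [Finset.sum_apply]
    exact (hlpos k).trans_le (single_le_sum (fun j _ => hl0 j k) (mem_univ k))
  · have := sum_nonpos fun j (_ : j ∈ univ) => hl j i
    rw [← sum_dotProduct, dotProduct_sub] at this
    linarith

section Scoring

variable {p : ℕ}

def tailSumScoring (w : Fin (p - 1) → ℝ) (k : Fin p) : ℝ :=
  ∑ j ∈ univ.filter fun j : Fin (p - 1) => (k.rev : ℕ) ≤ j, w j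

theorem tailSumScoring_strictMono {w : Fin (p - 1) → ℝ} (hw : ∀ j, 0 < w j) :
    StrictMono (tailSumScoring w) := by
  intro k k' hk
  have hrev : (k'.rev : ℕ) < k.rev := Fin.rev_lt_rev.2 hk
  have hj : (k'.rev : ℕ) < p - 1 := by omega
  refine sum_lt_sum_of_subset (i := ⟨k'.rev, hj⟩) ?_ ?_ ?_ (hw _) fun j _ _ => (hw j).le
  · intro j
    simp only [mem_filter, mem_univ, true_and]
    omega
  · simp
  · simp only [mem_filter, mem_univ, true_and, not_le]
    exact hrev

theorem bordaEstimate_tailSumScoring {n : ℕ} (u : Fin n → Equiv.Perm (Fin p))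
    (w : Fin (p - 1) → ℝ) (a : Fin p) :
    bordaEstimate u (tailSumScoring w) a = w ⬝ᵥ scoreVec u a := by
  simp only [bordaEstimate, tailSumScoring, Fin.rev_rev, scoreVec, dotProduct, sum_filter]
  rw [sum_comm]
  refine sum_congr rfl fun j _ => ?_
  rw [← sum_filter, sum_const, nsmul_eq_mul, mul_comm]

end Scoring

theorem paretoBoundary_convexHull_eligible_strict_general {n p : ℕ}
    (u : Fin n → Equiv.Perm (Fin p)) (a : Fin p)
    (ha : ParetoOpt (convexHull ℝ (Set.range (scoreVec u))) (scoreVec u a)) :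
    ∃ s : Fin p → ℝ, StrictMono s ∧
      ∀ b : Fin p, bordaEstimate u s b ≤ bordaEstimate u s a := by
  obtain ⟨w, hw, hwa⟩ := ha.exists_pos_dotProduct_le
  refine ⟨tailSumScoring w, tailSumScoring_strictMono hw, fun b => ?_⟩
  simpa only [bordaEstimate_tailSumScoring] using hwa b

/-- If the score vector of `a` lies on the Pareto boundary of the convex hull of
the set of all score vectors, then `a` is a de Borda winner for some strict
scoring `s` (i.e. `s_0 < s_1 < ... < s_{p-1}`). -/
theorem paretoBoundary_convexHull_eligible_strict {n p : ℕ} (hn : 1 ≤ n) (hp : 2 ≤ p)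
    (u : Fin n → Equiv.Perm (Fin p)) (a : Fin p)
    (ha : ParetoOpt (convexHull ℝ (Set.range (scoreVec u))) (scoreVec u a)) :
    ∃ s : Fin p → ℝ, StrictMono s ∧
      ∀ b : Fin p, bordaEstimate u s b ≤ bordaEstimate u s a :=
  paretoBoundary_convexHull_eligible_strict_general u a ha
end

section
/- Let u be a profile of n voters' strict preference orders on a set A of p candidates (p ≥ 2), let s be a scoring (s_0 ≤ s_1 ≤ … ≤ s_{p-1}, s_0 < s_{p-1}), and suppose a candidate a ∈ A belongs to the de Borda winner set β_s(u). Then the score vector r(a) belongs to the weak Pareto boundary of the convex hull of R = {r(x) : x ∈ A} ⊆ ℝ^{p-1}. -/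
/-!
Abel summation writes the points `s_{p-1-r}` a voter gives to a candidate of (0-indexed) rank `r`
as `s_0` plus the nonnegative increments `w_k = s_{p-1-k} - s_{p-2-k}` over all `k ≥ r`. Hence
`B_s(x) = n s_0 + ⟨w, r(x)⟩` with `w ≥ 0`, and `w ≠ 0` because the increments sum to
`s_{p-1} - s_0 > 0`. A winner `a` maximizes the linear functional `⟨w, ·⟩` on `R`, hence on its
convex hull, while any point strictly dominating `r(a)` would make it strictly larger.
-/

open Finset

theorem Finset.sum_range_ite_le_sub_succ {M : Type*} [AddCommGroup M] (g : ℕ → M) {r m : ℕ}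
    (h : r ≤ m) : ∑ k ∈ range m, (if r ≤ k then g k - g (k + 1) else 0) = g r - g m := by
  have hIco : {k ∈ range m | r ≤ k} = Ico r m := by ext k; simp [and_comm]
  rw [← sum_filter, hIco]
  simpa only [neg_sub_neg] using sum_Ico_sub (fun k => -g k) h

theorem weakParetoOpt_convexHull_of_dotProduct_le {m : ℕ} {R : Set (Fin m → ℝ)}
    {x w : Fin m → ℝ} (hx : x ∈ R) (hw : 0 < w) (hmax : ∀ y ∈ R, w ⬝ᵥ y ≤ w ⬝ᵥ x) :
    WeakParetoOpt (convexHull ℝ R) x := by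
  refine ⟨subset_convexHull ℝ R hx, ?_⟩
  rintro ⟨f, hf, hlt⟩
  have hle : w ⬝ᵥ f ≤ w ⬝ᵥ x :=
    convexHull_min hmax
      (convex_halfSpace_le ⟨dotProduct_add w, fun c y => dotProduct_smul c w y⟩ _) hf
  obtain ⟨hw0, k, hk⟩ := Pi.lt_def.1 hw
  have hlt' : w ⬝ᵥ x < w ⬝ᵥ f :=
    sum_lt_sum (fun j _ => mul_le_mul_of_nonneg_left (hlt j).le (hw0 j))
      ⟨k, mem_univ k, mul_lt_mul_of_pos_left (hlt k) hk⟩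
  exact hle.not_gt hlt'

section Borda

variable {n p : ℕ}

def bordaWeight (s : Fin p → ℝ) (k : Fin (p - 1)) : ℝ :=
  s ⟨p - 1 - k, by omega⟩ - s ⟨p - 2 - k, by omega⟩

theorem bordaWeight_nonneg {s : Fin p → ℝ} (hs : Monotone s) : 0 ≤ bordaWeight s :=
  fun _ => sub_nonneg.2 (hs (Fin.mk_le_mk.2 (by omega)))

theorem apply_rev_eq_add_sum_bordaWeight (s : Fin p → ℝ) (hp : 0 < p) (r : Fin p) :
    s r.rev = s ⟨0, hp⟩ + ∑ k : Fin (p - 1), if (r : ℕ) ≤ k then bordaWeight s k else 0 := by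
  set g : ℕ → ℝ := fun k => s ⟨p - 1 - k, by omega⟩
  have hw : ∀ k : Fin (p - 1), bordaWeight s k = g k - g (k + 1) := fun k => by
    simp only [bordaWeight, g]
    congr 3
    omega
  simp only [hw]
  rw [Fin.sum_univ_eq_sum_range (fun k => if (r : ℕ) ≤ k then g k - g (k + 1) else 0),
    sum_range_ite_le_sub_succ g (by omega : (r : ℕ) ≤ p - 1)]
  have hr : s r.rev = g r := congrArg s (Fin.ext (by simp only [Fin.val_rev]; omega))
  have h0 : s ⟨0, hp⟩ = g (p - 1) := congrArg s (Fin.ext (by simp))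
  rw [hr, h0]
  abel

theorem bordaEstimate_eq_add_dotProduct (u : Fin n → Equiv.Perm (Fin p)) (s : Fin p → ℝ)
    (hp : 0 < p) (x : Fin p) :
    bordaEstimate u s x = n * s ⟨0, hp⟩ + bordaWeight s ⬝ᵥ scoreVec u x := by
  simp only [bordaEstimate, apply_rev_eq_add_sum_bordaWeight s hp]
  rw [sum_add_distrib, sum_const, card_univ, Fintype.card_fin, nsmul_eq_mul, sum_comm]
  congr 1
  refine sum_congr rfl fun k _ => ?_
  rw [← sum_filter, sum_const, nsmul_eq_mul, mul_comm]
  rfl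

theorem bordaWeight_pos {s : Fin p → ℝ} (hmono : Monotone s) (hp : 0 < p)
    (hs : s ⟨0, hp⟩ < s ⟨p - 1, by omega⟩) : 0 < bordaWeight s := by
  refine lt_of_le_of_ne (bordaWeight_nonneg hmono) fun h => hs.ne ?_
  have htop := apply_rev_eq_add_sum_bordaWeight s hp ⟨0, hp⟩
  simp only [← h, Pi.zero_apply, ite_self, sum_const_zero, add_zero] at htop
  rw [← htop]
  congr 1

end Borda

/-- If `a` is a de Borda winner for a scoring `s` (i.e. `s_0 ≤ ... ≤ s_{p-1}`
with `s_0 < s_{p-1}`), then its score vector lies on the weak Pareto boundary of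
the convex hull of the set of all score vectors. -/
theorem winner_mem_weakParetoBoundary_convexHull {n p : ℕ} (hp : 2 ≤ p)
    (u : Fin n → Equiv.Perm (Fin p)) (s : Fin p → ℝ) (hmono : Monotone s)
    (hs : s ⟨0, by omega⟩ < s ⟨p - 1, by omega⟩)
    (a : Fin p) (ha : ∀ b : Fin p, bordaEstimate u s b ≤ bordaEstimate u s a) :
    WeakParetoOpt (convexHull ℝ (Set.range (scoreVec u))) (scoreVec u a) := by
  have hp0 : 0 < p := by omega
  refine weakParetoOpt_convexHull_of_dotProduct_le ⟨a, rfl⟩ (bordaWeight_pos hmono hp0 hs) ?_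
  rintro _ ⟨b, rfl⟩
  have hb := ha b
  rw [bordaEstimate_eq_add_dotProduct u s hp0, bordaEstimate_eq_add_dotProduct u s hp0] at hb
  linarith
end

section
/- Let u be a profile of n voters' strict preference orders on a set A of p candidates (p ≥ 2), and let a ∈ A be a candidate whose score vector r(a) belongs to the weak Pareto boundary of the convex hull of R = {r(x) : x ∈ A} ⊆ ℝ^{p-1}. Then there exists a scoring s (s_0 ≤ s_1 ≤ … ≤ s_{p-1}, s_0 < s_{p-1}) such that a belongs to the de Borda winner set β_s(u). -/
/-- If the score vector of `a` lies on the weak Pareto boundary of the convex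
hull of the set of all score vectors, then `a` is a de Borda winner for some
scoring `s` (i.e. `s_0 ≤ ... ≤ s_{p-1}` with `s_0 < s_{p-1}`). -/
theorem weakParetoBoundary_convexHull_eligible {n p : ℕ} (hn : 1 ≤ n) (hp : 2 ≤ p)
    (u : Fin n → Equiv.Perm (Fin p)) (a : Fin p)
    (ha : WeakParetoOpt (convexHull ℝ (Set.range (scoreVec u))) (scoreVec u a)) :
    ∃ s : Fin p → ℝ, Monotone s ∧ s ⟨0, by omega⟩ < s ⟨p - 1, by omega⟩ ∧
      ∀ b : Fin p, bordaEstimate u s b ≤ bordaEstimate u s a := by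
  classical
  set C := convexHull ℝ (Set.range (scoreVec u)) with hCdef
  set v := scoreVec u a with hvdef
  obtain ⟨hvC, hnex⟩ := ha
  set P : Set (Fin (p-1) → ℝ) := {g | ∀ j, v j < g j} with hPdef
  have hPconv : Convex ℝ P := by
    intro x hx y hy α β hα hβ hαβ j
    have h1 := hx j
    have h2 := hy j
    simp only [Pi.add_apply, Pi.smul_apply, smul_eq_mul]
    have hax : α * v j ≤ α * x j := mul_le_mul_of_nonneg_left h1.le hα
    have hby : β * v j ≤ β * y j := mul_le_mul_of_nonneg_left h2.le hβ
    have hsum : α * v j + β * v j = v j := by rw [← add_mul, hαβ, one_mul]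
    rcases hα.eq_or_lt with h|h
    · rw [← h] at hsum ⊢
      linarith [mul_lt_mul_of_pos_left h2 (show (0:ℝ) < β by linarith)]
    · linarith [mul_lt_mul_of_pos_left h1 h, hsum]
  have hPopen : IsOpen P := by
    have : P = ⋂ j, (fun g : Fin (p-1) → ℝ => g j) ⁻¹' Set.Ioi (v j) := by
      ext g; simp [hPdef, Set.mem_iInter]
    rw [this]
    exact isOpen_iInter_of_finite fun j => (isOpen_Ioi).preimage (continuous_apply j)
  have hdisj : Disjoint P C := by
    rw [Set.disjoint_left]
    intro g hgP hgC
    exact hnex ⟨g, hgC, hgP⟩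
  obtain ⟨φ, c, hφP, hφC⟩ :=
    geometric_hahn_banach_open hPconv hPopen (convex_convexHull ℝ _) hdisj
  -- basis vectors
  set e : Fin (p-1) → (Fin (p-1) → ℝ) := fun k => fun j => if k = j then 1 else 0 with hedef
  set lam : Fin (p-1) → ℝ := fun k => -(φ (e k)) with hlamdef
  have hφexpand : ∀ x : Fin (p-1) → ℝ, φ x = ∑ k, x k • φ (e k) := by
    intro x
    exact (φ : (Fin (p-1) → ℝ) →ₗ[ℝ] ℝ).pi_apply_eq_sum_univ x
  have hone : (fun _ : Fin (p-1) => (1:ℝ)) = ∑ k, e k := by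
    ext j
    simp [hedef, Finset.sum_apply, Finset.sum_ite_eq]
  have hmemP : ∀ δ : ℝ, 0 < δ → ∀ w : Fin (p-1) → ℝ, (∀ j, 0 ≤ w j) →
      (v + δ • (fun _ => (1:ℝ)) + w) ∈ P := by
    intro δ hδ w hw j
    simp only [hPdef, Set.mem_setOf_eq, Pi.add_apply, Pi.smul_apply, smul_eq_mul, mul_one]
    have := hw j
    linarith
  have hcv : c ≤ φ v := hφC v hvC
  have hφone : φ (fun _ => (1:ℝ)) < 0 := by
    have h1 := hφP _ (hmemP 1 one_pos 0 (fun j => le_rfl))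
    simp only [add_zero, map_add, map_smul, one_smul, smul_eq_mul] at h1
    linarith
  have hlam_nonneg : ∀ k, 0 ≤ lam k := by
    intro k
    rw [hlamdef]
    have key : ∀ ε : ℝ, 0 < ε → φ (e k) < ε := by
      intro ε hε
      set δ := ε / (-(φ (fun _ => (1:ℝ)))) with hδdef
      have hδ : 0 < δ := div_pos hε (by linarith)
      have hwk : ∀ j, 0 ≤ e k j := by
        intro j; rw [hedef]; dsimp only; split <;> norm_num
      have h1 := hφP _ (hmemP δ hδ (e k) hwk)
      rw [map_add, map_add, map_smul, smul_eq_mul] at h1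
      have ht : -(φ (fun _ : Fin (p-1) => (1:ℝ))) ≠ 0 := ne_of_gt (by linarith)
      have hδφ : δ * φ (fun _ => (1:ℝ)) = -ε := by
        rw [hδdef, div_mul_eq_mul_div, div_eq_iff ht]; ring
      linarith
    by_contra h
    push_neg at h
    have := key (φ (e k)) (by linarith)
    linarith
  have hφv_le : ∀ f ∈ C, φ v ≤ φ f := by
    intro f hf
    have hvle : ∀ ε : ℝ, 0 < ε → φ v < c + ε := by
      intro ε hε
      set δ := ε / (-(φ (fun _ => (1:ℝ)))) with hδdef
      have hδ : 0 < δ := div_pos hε (by linarith)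
      have h1 := hφP _ (hmemP δ hδ 0 (fun j => le_rfl))
      rw [add_zero, map_add, map_smul, smul_eq_mul] at h1
      have ht : -(φ (fun _ : Fin (p-1) => (1:ℝ))) ≠ 0 := ne_of_gt (by linarith)
      have hδφ : δ * φ (fun _ => (1:ℝ)) = -ε := by
        rw [hδdef, div_mul_eq_mul_div, div_eq_iff ht]; ring
      linarith
    have : φ v ≤ c := by
      by_contra h
      push_neg at h
      have := hvle ((φ v - c)/2) (by linarith)
      linarith
    linarith [hφC f hf]
  -- the scoring
  set s : Fin p → ℝ := fun j => ∑ k : Fin (p-1), if p - 1 - (j:ℕ) ≤ (k:ℕ) then lam k else 0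
    with hsdef
  have hkey : ∀ b : Fin p, bordaEstimate u s b = -φ (scoreVec u b) := by
    intro b
    have hφsc : φ (scoreVec u b) = ∑ k, scoreVec u b k * (-(lam k)) := by
      rw [hφexpand]
      refine Finset.sum_congr rfl fun k _ => ?_
      rw [hlamdef]; ring_nf
    rw [hφsc]
    rw [bordaEstimate]
    have hterm : ∀ i : Fin n, s (Fin.rev (u i b)) =
        ∑ k : Fin (p-1), if ((u i b : Fin p) : ℕ) ≤ (k:ℕ) then lam k else 0 := by
      intro i
      rw [hsdef]
      refine Finset.sum_congr rfl fun k _ => ?_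
      have hrev : ((Fin.rev (u i b)) : ℕ) = p - 1 - ((u i b : Fin p) : ℕ) := by
        simp [Fin.rev]; omega
      rw [hrev]
      have hlt : ((u i b : Fin p) : ℕ) < p := (u i b).isLt
      congr 1
      simp only [eq_iff_iff]
      omega
    calc ∑ i : Fin n, s (Fin.rev (u i b))
        = ∑ i : Fin n, ∑ k : Fin (p-1), if ((u i b : Fin p) : ℕ) ≤ (k:ℕ) then lam k else 0 :=
          Finset.sum_congr rfl fun i _ => hterm i
      _ = ∑ k : Fin (p-1), ∑ i : Fin n, if ((u i b : Fin p) : ℕ) ≤ (k:ℕ) then lam k else 0 :=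
          Finset.sum_comm
      _ = ∑ k : Fin (p-1), scoreVec u b k * lam k := by
          refine Finset.sum_congr rfl fun k _ => ?_
          rw [← Finset.sum_filter, Finset.sum_const, scoreVec]
          simp [nsmul_eq_mul]
      _ = -∑ k, scoreVec u b k * (-(lam k)) := by
          rw [← Finset.sum_neg_distrib]
          refine Finset.sum_congr rfl fun k _ => by ring
  refine ⟨s, ?_, ?_, ?_⟩
  · intro j j' hjj'
    rw [hsdef]
    refine Finset.sum_le_sum fun k _ => ?_
    have : p - 1 - (j':ℕ) ≤ p - 1 - (j:ℕ) := by omega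
    split_ifs with h1 h2 h2
    · exact le_rfl
    · omega
    · exact hlam_nonneg k
    · exact le_rfl
  · rw [hsdef]
    simp only
    have h0 : ∑ k : Fin (p-1), (if p - 1 - ((⟨0, by omega⟩ : Fin p) : ℕ) ≤ (k:ℕ) then lam k else 0) = 0 := by
      refine Finset.sum_eq_zero fun k _ => ?_
      rw [if_neg]
      have := k.isLt
      simp only [Fin.val_mk]
      omega
    have h1 : ∑ k : Fin (p-1), (if p - 1 - ((⟨p-1, by omega⟩ : Fin p) : ℕ) ≤ (k:ℕ) then lam k else 0) = ∑ k, lam k := by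
      refine Finset.sum_congr rfl fun k _ => ?_
      rw [if_pos]
      simp only [Fin.val_mk]
      omega
    rw [h0, h1]
    have : ∑ k, lam k = -(φ (fun _ => (1:ℝ))) := by
      rw [hone, map_sum, ← Finset.sum_neg_distrib]
    rw [this]
    linarith
  · intro b
    rw [hkey b, hkey a, ← hvdef]
    have := hφv_le (scoreVec u b) (subset_convexHull ℝ _ ⟨b, rfl⟩)
    linarith
end

section
/- Let S ⊆ ℝ^m be a finite set and F = conv(S) its convex hull. If a point f⁰ ∈ F belongs to the Pareto boundary of F, then there exist real coefficients d_1,…,d_m, all strictly positive, such that the linear function ℓ(f) = d_1 f_1 + … + d_m f_m attains its maximum over F at f⁰. -/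
/-!
Let `H = {x | x ≤ f - f⁰ for some f ∈ F}`. Pareto optimality of `f⁰` says that no positive
multiple of a basis vector `e_j` lies in `H`, so `e_j` is not in the cone generated by `H`, hence
not in the cone generated by the finitely many vectors `s - f⁰` (`s ∈ S`) and `-e_i`. Farkas'
lemma then gives a functional `y_j` that is `≤ 0` on these generators and positive at `e_j`:
it is maximised over `F` at `f⁰`, has nonnegative coefficients and a positive `j`-th one.
The sum of the `y_j` has all coefficients positive. Finiteness of `S` matters: for a general
compact convex `F` the supporting functionals at a Pareto point may all have a zero coefficient.
-/

open PointedCone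

lemma LinearMap.apply_nonpos_of_mem_hull {R E : Type*} [Semiring R] [PartialOrder R]
    [IsOrderedRing R] [AddCommMonoid E] [Module R E] {s : Set E} {y : E →ₗ[R] R}
    (hy : ∀ x ∈ s, y x ≤ 0) {x : E} (hx : x ∈ hull R s) : y x ≤ 0 := by
  induction hx using Submodule.span_induction with
  | mem x hx => exact hy x hx
  | zero => simp
  | add x z _ _ hx hz => rw [map_add]; exact add_nonpos hx hz
  | smul c x _ hx =>
    rw [← Nonneg.coe_smul, map_smul, smul_eq_mul]
    exact mul_nonpos_of_nonneg_of_nonpos c.2 hx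

lemma LinearMap.sum_apply_single_mul {R ι : Type*} [CommSemiring R] [Fintype ι] [DecidableEq ι]
    (ℓ : (ι → R) →ₗ[R] R) (f : ι → R) : ∑ i, ℓ (Pi.single i 1) * f i = ℓ f := by
  conv_rhs => rw [pi_eq_sum_univ' f]
  simp [mul_comm]

lemma Convex.setOf_exists_le_sub {𝕜 E : Type*} [Ring 𝕜] [PartialOrder 𝕜] [IsOrderedRing 𝕜]
    [AddCommGroup E] [PartialOrder E] [IsOrderedAddMonoid E] [Module 𝕜 E] [PosSMulMono 𝕜 E]
    {F : Set E} (hF : Convex 𝕜 F) (f₀ : E) : Convex 𝕜 {x | ∃ f ∈ F, x ≤ f - f₀} := by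
  rintro x ⟨f, hf, hx⟩ z ⟨g, hg, hz⟩ a b ha hb hab
  refine ⟨a • f + b • g, hF hf hg ha hb hab, ?_⟩
  calc a • x + b • z ≤ a • (f - f₀) + b • (g - f₀) :=
        add_le_add (smul_le_smul_of_nonneg_left hx ha) (smul_le_smul_of_nonneg_left hz hb)
    _ = a • f + b • g - (a + b) • f₀ := by simp only [smul_sub, add_smul]; abel
    _ = a • f + b • g - f₀ := by rw [hab, one_smul]

namespace PointedCone

variable {K E : Type*} [Field K] [LinearOrder K] [IsStrictOrderedRing K]
  [AddCommGroup E] [Module K E]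

lemma mem_hull_insert_of_mem_hull_image {s : Set E} {y : Module.Dual K E}
    (hy : ∀ x ∈ s, y x ≤ 0) {a b : E} (ha : 0 < y a) (hb : 0 ≤ y b)
    (hmem : y a • b - y b • a ∈ hull K ((fun x ↦ y a • x - y x • a) '' s)) :
    b ∈ hull K (insert a s) := by
  let φ : E →ₗ[K] E := y a • LinearMap.id - y.smulRight a
  have hφ : hull K ((fun x ↦ y a • x - y x • a) '' s) = (hull K s).map φ := by
    rw [PointedCone.map, Submodule.map_span]
    rfl
  rw [hφ] at hmem
  obtain ⟨x, hx, hφx⟩ := hmem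
  have hμ : 0 ≤ (y b - y x) / y a :=
    div_nonneg (by linarith [y.apply_nonpos_of_mem_hull hy hx]) ha.le
  have hb : b = x + ((y b - y x) / y a) • a := by
    replace hφx : y a • x - y x • a = y a • b - y b • a := hφx
    apply smul_right_injective E ha.ne'
    simp only [smul_add, smul_smul, mul_div_cancel₀ _ ha.ne', sub_smul]
    linear_combination (norm := module) -hφx
  rw [hb, ← Nonneg.mk_smul _ hμ]
  exact add_mem (Submodule.span_mono (Set.subset_insert a s) hx)
    (Submodule.smul_mem _ _ (Submodule.subset_span (Set.mem_insert a s)))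

theorem exists_dual_nonpos_of_notMem_hull (s : Finset E) {b : E}
    (hb : b ∉ hull K (s : Set E)) :
    ∃ y : Module.Dual K E, (∀ x ∈ s, y x ≤ 0) ∧ 0 < y b := by
  classical
  induction hn : s.card using Nat.strong_induction_on generalizing s b with
  | _ n ih =>
  obtain rfl | ⟨a, has⟩ := s.eq_empty_or_nonempty
  · have hb0 : b ≠ 0 := fun h ↦ hb (h ▸ zero_mem _)
    obtain ⟨y, hy⟩ := Module.Projective.exists_dual_eq_one K hb0
    exact ⟨y, by simp, hy ▸ one_pos⟩
  set t := s.erase a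
  have hs : s = insert a t := (Finset.insert_erase has).symm
  have ht : t.card < n := hn ▸ Finset.card_erase_lt_of_mem has
  rw [hs, Finset.coe_insert] at hb
  obtain ⟨y, hyt, hyb⟩ :=
    ih _ ht t (fun h ↦ hb (Submodule.span_mono (Set.subset_insert _ _) h)) rfl
  simp only [hs, Finset.forall_mem_insert]
  by_cases hya : y a ≤ 0
  · exact ⟨y, ⟨hya, hyt⟩, hyb⟩
  replace hya := not_le.1 hya
  -- Fourier–Motzkin elimination of `a`: `φ` kills `a`, and separating `φ b` from `φ '' t`
  -- by some `z` separates `b` from `insert a t` by `z ∘ φ`.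
  let φ : E →ₗ[K] E := y a • LinearMap.id - y.smulRight a
  have hφb : φ b ∉ hull K (t.image φ : Set E) := fun h ↦
    hb <| mem_hull_insert_of_mem_hull_image hyt hya hyb.le <| by
      rwa [Finset.coe_image] at h
  obtain ⟨z, hzt, hzb⟩ := ih _ (Finset.card_image_le.trans_lt ht) (t.image φ) hφb rfl
  exact ⟨z ∘ₗ φ, ⟨by simp [φ], fun x hx ↦ hzt _ (Finset.mem_image_of_mem φ hx)⟩, hzb⟩

end PointedCone

namespace ParetoOpt

variable {m : ℕ}

lemma single_notMem_hull {F : Set (Fin m → ℝ)} {f₀ : Fin m → ℝ}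
    (h : ParetoOpt F f₀) (hF : Convex ℝ F) (j : Fin m) :
    Pi.single j 1 ∉ hull ℝ {x | ∃ f ∈ F, x ≤ f - f₀} := by
  set H := {x | ∃ f ∈ F, x ≤ f - f₀}
  have h0 : (0 : Fin m → ℝ) ∈ H := ⟨f₀, h.1, (sub_self f₀).ge⟩
  have hle : hull ℝ H ≤ (ConvexCone.hull ℝ H).toPointedCone (ConvexCone.subset_hull h0) :=
    Submodule.span_le.2 ConvexCone.subset_hull
  intro hj
  obtain ⟨r, hr, x, ⟨f, hf, hxf⟩, hrx⟩ :=
    (ConvexCone.mem_hull_of_convex (hF.setOf_exists_le_sub f₀)).1 (hle hj)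
  have hx : ∀ i, r * x i = (Pi.single j 1 : Fin m → ℝ) i := fun i ↦ by
    simpa using congrFun hrx i
  refine h.2 ⟨f, hf, fun i ↦ ?_, j, ?_⟩
  · have : 0 ≤ x i :=
      (mul_nonneg_iff_of_pos_left hr).1 (by simp [hx, Pi.single_apply, apply_ite])
    linarith [hxf i, Pi.sub_apply f f₀ i]
  · have : 0 < x j := (mul_pos_iff_of_pos_left hr).1 (by simp [hx])
    linarith [hxf j, Pi.sub_apply f f₀ j]

lemma exists_supporting_dual_single_pos {S : Finset (Fin m → ℝ)} {f₀ : Fin m → ℝ}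
    (h : ParetoOpt (convexHull ℝ (S : Set (Fin m → ℝ))) f₀) (j : Fin m) :
    ∃ y : Module.Dual ℝ (Fin m → ℝ),
      (∀ s ∈ S, y s ≤ y f₀) ∧ (∀ i, 0 ≤ y (Pi.single i 1)) ∧ 0 < y (Pi.single j 1) := by
  classical
  let gens : Finset (Fin m → ℝ) :=
    S.image (· - f₀) ∪ Finset.univ.image fun i ↦ -Pi.single i 1
  have hgens :
      (gens : Set (Fin m → ℝ)) ⊆ {x | ∃ f ∈ convexHull ℝ (S : Set _), x ≤ f - f₀} := by
    intro x hx
    simp only [gens, Finset.coe_union, Finset.coe_image, Set.mem_union, Set.mem_image] at hx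
    rcases hx with ⟨s, hs, rfl⟩ | ⟨i, -, rfl⟩
    · exact ⟨s, subset_convexHull ℝ _ hs, le_rfl⟩
    · exact ⟨f₀, h.1, by simp [Pi.single_nonneg]⟩
  obtain ⟨y, hy, hyj⟩ := exists_dual_nonpos_of_notMem_hull gens
    fun hj ↦ h.single_notMem_hull (convex_convexHull ℝ _) j (Submodule.span_mono hgens hj)
  refine ⟨y, fun s hs ↦ ?_, fun i ↦ ?_, hyj⟩
  · simpa [sub_nonpos] using
      hy (s - f₀) (Finset.mem_union_left _ (Finset.mem_image_of_mem _ hs))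
  · simpa using hy (-Pi.single i 1) (by simp [gens])

end ParetoOpt

/-- If a point `f0` of the convex hull of a finite set `S ⊆ ℝ^m` belongs to the
Pareto boundary of that convex hull, then some linear function with strictly
positive coefficients attains its maximum over the convex hull at `f0`. -/
theorem paretoBoundary_exists_pos_linear_max {m : ℕ} (S : Finset (Fin m → ℝ))
    (f0 : Fin m → ℝ)
    (h : ParetoOpt (convexHull ℝ (S : Set (Fin m → ℝ))) f0) :
    ∃ d : Fin m → ℝ, (∀ j, 0 < d j) ∧
      ∀ f ∈ convexHull ℝ (S : Set (Fin m → ℝ)),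
        ∑ j, d j * f j ≤ ∑ j, d j * f0 j := by
  choose y hy_le hy_nonneg hy_pos using h.exists_supporting_dual_single_pos
  set ℓ := ∑ j, y j
  refine ⟨fun i ↦ ℓ (Pi.single i 1), fun i ↦ ?_, fun f hf ↦ ?_⟩
  · simpa [ℓ] using Finset.sum_pos' (fun j _ ↦ hy_nonneg j i) ⟨i, Finset.mem_univ i, hy_pos i⟩
  · rw [ℓ.sum_apply_single_mul, ℓ.sum_apply_single_mul]
    refine convexHull_min (fun s hs ↦ ?_) (convex_halfSpace_le ℓ.isLinear _) hf
    simpa [ℓ] using Finset.sum_le_sum fun j _ ↦ hy_le j s hs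
end

section
/- Consider the profile u with 16 voters and 3 candidates a, b, c in which 2 voters have preference a > b > c, 6 voters have preference b > a > c, 7 voters have preference c > a > b, and 1 voter has preference c > b > a. Then for every scoring s = (s_0, s_1, s_2) with s_0 ≤ s_1 ≤ s_2 and s_0 < s_2, the candidate b does not belong to the de Borda winner set β_s(u); that is, B_s(b) < max(B_s(a), B_s(c)). -/
/-- The 16-voter, 3-candidate profile of A. V. Shapovalov: candidates are
`0 = a`, `1 = b`, `2 = c`; voters `0,1` have preference `a > b > c`,
voters `2,…,7` have preference `b > a > c`, voters `8,…,14` have preference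
`c > a > b`, and voter `15` has preference `c > b > a`.  The value
`shapProfile i x : Fin 3` is the 0-indexed rank of candidate `x` for voter `i`. -/
def shapProfile : Fin 16 → Equiv.Perm (Fin 3) := fun i =>
  if (i : ℕ) < 2 then Equiv.refl (Fin 3)          -- a > b > c
  else if (i : ℕ) < 8 then Equiv.swap 0 1         -- b > a > c
  else if (i : ℕ) < 15 then finRotate 3           -- c > a > b
  else Equiv.swap 0 2                             -- c > b > a

/-- In the Shapovalov profile, candidate `b` (i.e. `1`) is not a winner for any
scoring `s = (s_0, s_1, s_2)` with `s_0 ≤ s_1 ≤ s_2` and `s_0 < s_2`: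
its de Borda estimate is strictly less than the larger of the estimates of
`a` (i.e. `0`) and `c` (i.e. `2`). -/
theorem shap_b_never_wins (s : Fin 3 → ℝ)
    (h01 : s 0 ≤ s 1) (h12 : s 1 ≤ s 2) (h02 : s 0 < s 2) :
    bordaEstimate shapProfile s 1 <
      max (bordaEstimate shapProfile s 0) (bordaEstimate shapProfile s 2) := by
  simp only [bordaEstimate, shapProfile, Fin.sum_univ_succ, Finset.sum_empty,
    Fin.sum_univ_zero, Fin.isValue]
  norm_num [Fin.rev, Equiv.swap_apply_def, Fin.ext_iff, finRotate_succ_apply, Fin.add_def, lt_max_iff, show ((3:Fin 3):ℕ)=0 from rfl, show ((⟨2, by norm_num⟩:Fin 3))=2 from rfl]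
  by_cases h : 6 * s 2 + 3 * s 1 + 7 * s 0 < 2 * s 2 + 13 * s 1 + s 0
  · left; nlinarith
  · right; nlinarith
end

section
/- Let u be a profile of n voters' strict preference orders on a set A of p candidates (p ≥ 2), let s be a strict scoring (s_0 < s_1 < … < s_{p-1}), and let a ∈ A be a candidate in the winner set β_s(u). Then the score vector r(a) belongs to the Pareto boundary of the finite set R = {r(x) : x ∈ A} itself (not merely of its convex hull). -/
lemma tele_aux (g : ℕ → ℝ) (m r : ℕ) (hr : r ≤ m) :
    ∑ k ∈ Finset.range m, (if r ≤ k then g (m - k) - g (m - 1 - k) else 0)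
      = g (m - r) - g 0 := by
  rw [← Finset.sum_filter]
  have h1 : (Finset.range m).filter (fun k => r ≤ k) = Finset.Ico r m := by
    ext k; simp [Finset.mem_Ico]; omega
  rw [h1, Finset.sum_Ico_eq_sum_range]
  rw [← Finset.sum_range_reflect]
  have h2 : ∀ j ∈ Finset.range (m - r),
      g (m - (r + (m - r - 1 - j))) - g (m - 1 - (r + (m - r - 1 - j)))
        = g (j + 1) - g j := by
    intro j hj
    simp only [Finset.mem_range] at hj
    congr 2 <;> omega
  rw [Finset.sum_congr rfl h2, Finset.sum_range_sub]

/-- If `a` is a de Borda winner for a strict scoring `s`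
(i.e. `s_0 < s_1 < ... < s_{p-1}`), then its score vector belongs to the Pareto
boundary of the finite set `R` of score vectors itself. -/
theorem winner_strict_mem_paretoBoundary_R {n p : ℕ} (hn : 1 ≤ n) (hp : 2 ≤ p)
    (u : Fin n → Equiv.Perm (Fin p)) (s : Fin p → ℝ) (hs : StrictMono s)
    (a : Fin p) (ha : ∀ b : Fin p, bordaEstimate u s b ≤ bordaEstimate u s a) :
    ParetoOpt (Set.range (scoreVec u)) (scoreVec u a) := by
  have hp0 : 0 < p := by omega
  set g : ℕ → ℝ := fun j => s ⟨j % p, Nat.mod_lt _ hp0⟩ with hg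
  have hgmono : ∀ {i j : ℕ}, i < j → j ≤ p - 1 → g i < g j := by
    intro i j hij hj
    apply hs
    simp only [Fin.lt_def]
    rw [Nat.mod_eq_of_lt (by omega), Nat.mod_eq_of_lt (by omega)]
    exact hij
  have key : ∀ x : Fin p, bordaEstimate u s x
      = n * g 0 + ∑ k : Fin (p - 1), (g (p - 1 - k) - g (p - 1 - 1 - k)) * scoreVec u x k := by
    intro x
    have hvoter : ∀ i : Fin n, s (Fin.rev (u i x)) =
        g 0 + ∑ k : Fin (p - 1),
          (if ((u i x : Fin p) : ℕ) ≤ (k : ℕ) then g (p - 1 - k) - g (p - 1 - 1 - k) else 0) := by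
      intro i
      have hr : ((u i x : Fin p) : ℕ) ≤ p - 1 := by have := (u i x).isLt; omega
      rw [Fin.sum_univ_eq_sum_range
        (fun k => if ((u i x : Fin p) : ℕ) ≤ k then g (p - 1 - k) - g (p - 1 - 1 - k) else 0)]
      rw [tele_aux g (p - 1) _ hr]
      have h3 : g (p - 1 - ((u i x : Fin p) : ℕ)) = s (Fin.rev (u i x)) := by
        simp only [hg]
        congr 1
        have := (u i x).isLt
        ext
        simp only [Fin.val_rev]
        rw [Nat.mod_eq_of_lt (by omega)]
        omega
      rw [h3]; ring
    unfold bordaEstimate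
    rw [Finset.sum_congr rfl (fun i _ => hvoter i), Finset.sum_add_distrib,
      Finset.sum_const, Finset.sum_comm]
    congr 1
    · simp [nsmul_eq_mul]
    · apply Finset.sum_congr rfl
      intro k _
      rw [← Finset.sum_filter, Finset.sum_const, nsmul_eq_mul]
      simp [scoreVec, mul_comm]
  constructor
  · exact ⟨a, rfl⟩
  · rintro ⟨f, ⟨b, rfl⟩, hle, j0, hlt⟩
    have hd : ∀ k : Fin (p - 1), 0 < g (p - 1 - k) - g (p - 1 - 1 - k) := by
      intro k
      have hk := k.isLt
      have h1 : p - 1 - 1 - (k : ℕ) < p - 1 - (k : ℕ) := by omega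
      have := hgmono h1 (by omega)
      linarith
    have hsum : ∑ k : Fin (p - 1), (g (p - 1 - k) - g (p - 1 - 1 - k)) * scoreVec u a k
        < ∑ k : Fin (p - 1), (g (p - 1 - k) - g (p - 1 - 1 - k)) * scoreVec u b k := by
      apply Finset.sum_lt_sum
      · intro k _
        exact mul_le_mul_of_nonneg_left (hle k) (le_of_lt (hd k))
      · exact ⟨j0, Finset.mem_univ _, mul_lt_mul_of_pos_left hlt (hd j0)⟩
    have hab := ha b
    rw [key a, key b] at hab
    linarith
end
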